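/- Let y₁, y₂ > 0 be real numbers satisfying 27·y₁⁴·y₂⁴ − 18·y₁²·y₂² + 4·y₁² + 4·y₂² = 1. Then every complex root of the polynomial E (a polynomial of degree 6 with leading coefficient y₁² + y₂² + 2 ≠ 0, viewed over ℂ) is real. -/

import Mathlib

/-!
With `a = t² + 4t + 1` and `b = t² - 2t - 2` one has `E = y₁² a³ + y₂² b³ + a b (a + b)`.
The roots of `b` are `1 ± √3`. At a root with `b ≠ 0`, the ratio `u = a / b` is a root of
the real cubic `y₁² u³ + u² + u + y₂²`, whose discriminant vanishes exactly on the caustic;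
a real cubic with a non-real root has negative discriminant, so `u` is real. Then `t` is a
root of the real quadratic `a - u b`, whose discriminant `12 (u² + u + 1)` is positive,
so `t` is real.
-/

open Polynomial

/-- The polynomial `E` viewed over ℂ (degree 6, leading coefficient `y₁²+y₂²+2`). -/
noncomputable def EPoly (y₁ y₂ : ℝ) : Polynomial ℂ :=
  C ((y₁ : ℂ)^2) * (X^2 + 4*X + 1)^3 + C ((y₂ : ℂ)^2) * (X^2 - 2*X - 2)^3
    + 2*X^6 + 6*X^5 - 15*X^4 - 40*X^3 - 15*X^2 + 6*X + 2

namespace Complex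

theorem im_eq_zero_of_quadratic_eq_zero {a b c : ℝ} (hab : a ≠ 0 ∨ b ≠ 0)
    (hd : 0 ≤ discrim a b c) {z : ℂ} (hz : (a : ℂ) * z ^ 2 + b * z + c = 0) :
    z.im = 0 := by
  obtain ⟨hre, him⟩ := Complex.ext_iff.mp hz
  simp only [pow_two, add_re, add_im, mul_re, mul_im, ofReal_re, ofReal_im, zero_re,
    zero_im] at hre him
  by_contra ht
  have hvertex : 2 * a * z.re + b = 0 :=
    (mul_eq_zero.mp (by linear_combination him : z.im * (2 * a * z.re + b) = 0)).resolve_left ht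
  -- completing the square: `4a·(a z² + b z + c) = (2a z + b)² - discrim a b c` on real parts
  have hsq : discrim a b c + 4 * (a * z.im) ^ 2 = 0 := by
    rw [discrim]; linear_combination (2 * a * z.re + b) * hvertex - 4 * a * hre
  have ha : a = 0 := by
    have : (a * z.im) ^ 2 = 0 := by nlinarith [sq_nonneg (a * z.im)]
    simpa [ht] using this
  exact hab.elim (· ha) (· (by simpa [ha] using hvertex))

theorem im_eq_zero_of_cubic_discr_eq_zero {P : Cubic ℝ} (hP : P ≠ 0) (hdiscr : P.discr = 0)
    {u : ℂ} (hu : (P.a : ℂ) * u ^ 3 + P.b * u ^ 2 + P.c * u + P.d = 0) : u.im = 0 := by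
  obtain ⟨hre, him⟩ := Complex.ext_iff.mp hu
  simp only [pow_succ, pow_zero, one_mul, add_re, add_im, mul_re, mul_im, ofReal_re,
    ofReal_im, zero_re, zero_im] at hre him
  set x := u.re
  set y := u.im
  by_contra hy
  have hc : P.c = -P.a * (3 * x ^ 2 - y ^ 2) - 2 * P.b * x := by
    have : y * (P.a * (3 * x ^ 2 - y ^ 2) + 2 * P.b * x + P.c) = 0 := by
      linear_combination him
    linear_combination (mul_eq_zero.mp this).resolve_left hy
  have hd : P.d = -P.a * (x ^ 3 - 3 * x * y ^ 2) - P.b * (x ^ 2 - y ^ 2) - P.c * x := by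
    linear_combination hre
  -- a real cubic with the non-real root `u` also has the root `conj u`; the third root is
  -- `r = -b/a - 2x`, and `discr = a⁴ (u - conj u)² |u - r|⁴`
  have hT : ((3 * P.a * x + P.b) ^ 2 + (P.a * y) ^ 2) ^ 2 = 0 := by
    have key : P.discr = -4 * y ^ 2 * ((3 * P.a * x + P.b) ^ 2 + (P.a * y) ^ 2) ^ 2 := by
      rw [Cubic.discr, hd, hc]; ring
    simpa [hy, hdiscr] using key
  have ha : P.a = 0 := by
    have : (P.a * y) ^ 2 = 0 := by
      nlinarith [sq_nonneg (3 * P.a * x + P.b), sq_nonneg (P.a * y)]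
    simpa [hy] using this
  have hb : P.b = 0 := by
    have : (3 * P.a * x + P.b) ^ 2 = 0 := by
      nlinarith [sq_nonneg (3 * P.a * x + P.b), sq_nonneg (P.a * y)]
    simpa [ha] using this
  have hc0 : P.c = 0 := by rw [hc, ha, hb]; ring
  exact hP (Cubic.ext ha hb hc0 (show P.d = 0 by rw [hd, ha, hb, hc0]; ring))

end Complex

theorem eval_EPoly (y₁ y₂ : ℝ) (z : ℂ) :
    (EPoly y₁ y₂).eval z =
      (y₁ : ℂ) ^ 2 * (z ^ 2 + 4 * z + 1) ^ 3 + (y₂ : ℂ) ^ 2 * (z ^ 2 - 2 * z - 2) ^ 3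
        + (z ^ 2 + 4 * z + 1) * (z ^ 2 - 2 * z - 2)
          * ((z ^ 2 + 4 * z + 1) + (z ^ 2 - 2 * z - 2)) := by
  simp only [EPoly, eval_add, eval_sub, eval_mul, eval_pow, eval_C, eval_X, eval_one, eval_ofNat]
  ring

theorem stmt_14_general (y₁ y₂ : ℝ)
    (h : 27 * y₁^4 * y₂^4 - 18 * y₁^2 * y₂^2 + 4 * y₁^2 + 4 * y₂^2 = 1) :
    ∀ z : ℂ, (EPoly y₁ y₂).IsRoot z → ∃ r : ℝ, z = (r : ℂ) := by
  intro z hz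
  suffices hz_im : z.im = 0 from ⟨z.re, Complex.ext (by simp) (by simp [hz_im])⟩
  rw [IsRoot, eval_EPoly] at hz
  set a := z ^ 2 + 4 * z + 1
  set b := z ^ 2 - 2 * z - 2
  by_cases hb : b = 0
  · exact Complex.im_eq_zero_of_quadratic_eq_zero (a := 1) (b := -2) (c := -2)
      (by norm_num) (by norm_num [discrim]) (by push_cast; linear_combination hb)
  set u := a / b
  have hu : ((y₁ ^ 2 : ℝ) : ℂ) * u ^ 3 + ((1 : ℝ) : ℂ) * u ^ 2 + ((1 : ℝ) : ℂ) * u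
      + ((y₂ ^ 2 : ℝ) : ℂ) = 0 := by
    simp only [u]; push_cast; field_simp; linear_combination hz
  have hu_im := Complex.im_eq_zero_of_cubic_discr_eq_zero (P := ⟨y₁ ^ 2, 1, 1, y₂ ^ 2⟩)
    (fun h0 => one_ne_zero (congrArg Cubic.b h0)) (by rw [Cubic.discr]; linear_combination -h) hu
  have hu_re : u = (u.re : ℂ) := Complex.ext (by simp) (by simp [hu_im])
  have hquad : ((1 - u.re : ℝ) : ℂ) * z ^ 2 + ((4 + 2 * u.re : ℝ) : ℂ) * z
      + ((1 + 2 * u.re : ℝ) : ℂ) = 0 := by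
    have hab : a = u * b := (div_mul_cancel₀ a hb).symm
    rw [hu_re] at hab; push_cast; linear_combination hab
  refine Complex.im_eq_zero_of_quadratic_eq_zero ?_ ?_ hquad
  · by_contra! h1; linarith [h1.1, h1.2]
  · rw [discrim]; nlinarith [sq_nonneg (2 * u.re + 1)]

/-- on the curve `27y₁⁴y₂⁴ − 18y₁²y₂² + 4y₁² + 4y₂² = 1` every
complex root of `E` is real. -/
theorem stmt_14 (y₁ y₂ : ℝ) (hy₁ : 0 < y₁) (hy₂ : 0 < y₂)
    (h : 27 * y₁^4 * y₂^4 - 18 * y₁^2 * y₂^2 + 4 * y₁^2 + 4 * y₂^2 = 1) :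
    ∀ z : ℂ, (EPoly y₁ y₂).IsRoot z → ∃ r : ℝ, z = (r : ℂ) :=
  stmt_14_general y₁ y₂ h
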